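/- Define an involution φ on Dyck paths of size n as follows: call a peak bad if its y-coordinate is even and a valley bad if its x-coordinate is odd; if P has no bad corner set φ(P)=P, otherwise swap the two steps of the first (leftmost) bad corner of P. Then φ is an involution on the set of Dyck paths of size n, and its fixed-point set is exactly the set of Dyck paths with no peak of even y-coordinate and no valley of odd x-coordinate. -/

import Mathlib

/-- A Dyck path of size `n`: a list of booleans (`true` = north step, `false` = east step)
from `(0,0)` to `(n,n)` staying weakly above the diagonal `y = x`. -/
def IsDyckPath (n : ℕ) (w : List Bool) : Prop :=
  w.length = 2 * n ∧ w.count true = n ∧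
    ∀ k, (w.take k).count false ≤ (w.take k).count true

/-- The `y`-coordinate of the lattice point reached after `k` steps. -/
def ycoord (w : List Bool) (k : ℕ) : ℕ := (w.take k).count true

/-- The `x`-coordinate of the lattice point reached after `k` steps. -/
def xcoord (w : List Bool) (k : ℕ) : ℕ := (w.take k).count false

/-- A peak: a north step at position `i` followed by an east step. -/
def IsPeak (w : List Bool) (i : ℕ) : Prop := w[i]? = some true ∧ w[i+1]? = some false

/-- A valley: an east step at position `i` followed by a north step. -/
def IsValley (w : List Bool) (i : ℕ) : Prop := w[i]? = some false ∧ w[i+1]? = some true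

/-- Height above the diagonal after `k` steps. -/
def pdepth (w : List Bool) (k : ℕ) : ℤ := (ycoord w k : ℤ) - (xcoord w k : ℤ)

/-- Step `i` (a north step) of `w` is matched with step `j` (an east step):
the facing east step at the same height (balanced-parentheses matching). -/
def Matches (w : List Bool) (i j : ℕ) : Prop :=
  i < j ∧ w[i]? = some true ∧ w[j]? = some false ∧
    pdepth w (j + 1) = pdepth w i ∧ ∀ k, i < k → k ≤ j → pdepth w i < pdepth w k

/-- The graph on `m` points whose edges are the upper arches and the lower arches;
its connected components are the components of the corresponding meander. -/
def meanderGraph (m : ℕ) (upper lower : ℕ → ℕ → Prop) : SimpleGraph (Fin m) where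
  Adj i j := i ≠ j ∧ (upper i.1 j.1 ∨ upper j.1 i.1 ∨ lower i.1 j.1 ∨ lower j.1 i.1)
  symm := by
    constructor
    intro i j h
    exact ⟨h.1.symm, by tauto⟩
  loopless := by
    constructor
    intro i h
    exact h.1 rfl

/-- The number of components of the meander with the matching of `P` above and the
matching of `Q` below. -/
noncomputable def trajPQ (n : ℕ) (P Q : List Bool) : ℕ :=
  Nat.card (meanderGraph (2 * n) (Matches P) (Matches Q)).ConnectedComponent

/-- The number of components of the meander with the matching of `P` above and the
rainbow matching `i ↦ 2n - 1 - i` below. -/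
noncomputable def traj (n : ℕ) (P : List Bool) : ℕ :=
  Nat.card (meanderGraph (2 * n) (Matches P)
    (fun i j => i + j + 1 = 2 * n)).ConnectedComponent

/-- No peak with even `y`-coordinate and no valley with odd `x`-coordinate. -/
def NoBadCorner (w : List Bool) : Prop :=
  (∀ i, IsPeak w i → Odd (ycoord w (i + 1))) ∧
  (∀ i, IsValley w i → Even (xcoord w (i + 1)))

/-- A bad corner: a peak with even `y`-coordinate or a valley with odd `x`-coordinate. -/
def IsBadCorner (w : List Bool) (i : ℕ) : Prop :=
  (IsPeak w i ∧ Even (ycoord w (i + 1))) ∨ (IsValley w i ∧ Odd (xcoord w (i + 1)))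

/-- Interchange the two steps of the corner at positions `i`, `i+1`. -/
def swapCorner (w : List Bool) (i : ℕ) : List Bool :=
  (w.set i (w.getD (i + 1) true)).set (i + 1) (w.getD i true)

open Classical in
/-- The involution `φ`: swap the two steps of the first bad corner, if any. -/
noncomputable def phiMap (w : List Bool) : List Bool :=
  if h : ∃ i, IsBadCorner w i then swapCorner w (Nat.find h) else w

/-- The number of unit squares between a Dyck path and the diagonal `y = x`. -/
def area (w : List Bool) : ℕ :=
  ((List.range w.length).map fun i =>
    if w.getD i true then 0 else ycoord w i - xcoord w i - 1).sum

/-- The zigzag Dyck path `(NE)^m`. -/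
def zigzag (m : ℕ) : List Bool := (List.replicate m [true, false]).flatten

/-- `N^{2a_1} E^{2b_1} ⋯ N^{2a_t} E^{2b_t}` for `ab = [(a_1,b_1),…,(a_t,b_t)]`. -/
def doubledWord (ab : List (ℕ × ℕ)) : List Bool :=
  (ab.map fun p => List.replicate (2 * p.1) true ++ List.replicate (2 * p.2) false).flatten

/-- `N^{a_1} E^{b_1} ⋯ N^{a_t} E^{b_t}` for `ab = [(a_1,b_1),…,(a_t,b_t)]`. -/
def halfWord (ab : List (ℕ × ℕ)) : List Bool :=
  (ab.map fun p => List.replicate p.1 true ++ List.replicate p.2 false).flatten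

/-- All peaks at odd height (`height` = `y - x` at the peak's lattice point). -/
def AllPeaksOdd (w : List Bool) : Prop :=
  ∀ i, IsPeak w i → Odd (ycoord w (i + 1) - xcoord w (i + 1))

/-- All peaks at even height. -/
def AllPeaksEven (w : List Bool) : Prop :=
  ∀ i, IsPeak w i → Even (ycoord w (i + 1) - xcoord w (i + 1))

/-- Steps of a Motzkin path: up, horizontal, down. -/
inductive MStep | U | H | D
deriving DecidableEq

/-- The total height change along a list of Motzkin steps. -/
def msum (l : List MStep) : ℤ :=
  (l.map fun s => match s with | MStep.U => 1 | MStep.H => 0 | MStep.D => -1).sum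

/-- A Motzkin path of length `n`. -/
def IsMotzkin (n : ℕ) (l : List MStep) : Prop :=
  l.length = n ∧ msum l = 0 ∧ ∀ k, 0 ≤ msum (l.take k)

/-- A Riordan path of length `n`: a Motzkin path with no horizontal step on the `x`-axis. -/
def IsRiordan (n : ℕ) (l : List MStep) : Prop :=
  IsMotzkin n l ∧ ∀ i, l[i]? = some MStep.H → msum (l.take i) ≠ 0

/-- The map `φ_A` from Dyck paths of size `n+1` (all peaks at odd height)
to Motzkin paths of length `n`: `v_j` is read off from steps `p_{2j} p_{2j+1}`. -/
def phiA (n : ℕ) (P : List Bool) : List MStep :=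
  (List.range n).map fun j =>
    match P.getD (2 * j + 1) true, P.getD (2 * j + 2) true with
    | true, true => MStep.U
    | false, true => MStep.H
    | _, _ => MStep.D

/-- The map `φ_B` from Dyck paths of size `n` (all peaks at even height)
to Riordan paths of length `n`: `u_j` is read off from steps `p_{2j-1} p_{2j}`. -/
def phiB (n : ℕ) (P : List Bool) : List MStep :=
  (List.range n).map fun j =>
    match P.getD (2 * j) true, P.getD (2 * j + 1) true with
    | true, true => MStep.U
    | false, true => MStep.H
    | _, _ => MStep.D

/-!
Write the path as `u ++ a :: b :: t`, where `ab` is its first bad corner. Before the first bad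
corner the parities are rigid: after a north step `x` is even and after an east step `y` is odd,
since the path starts with a north step and every corner that is not bad passes this on. At a
bad peak this makes `x` even and `y` odd at the start of the peak, so `x < y` and the swapped
valley stays above the diagonal and has odd `x`, i.e. it is bad; dually for a bad valley. The
corner just before the swapped one cannot become bad, because its coordinate has the wrong
parity, and the corners further left are untouched. So `φ` keeps the position of the first bad
corner, and swapping it twice gives back the path.
-/

theorem List.exists_eq_append_cons_cons {α : Type*} {l : List α} {i : ℕ}
    (h : i + 1 < l.length) : ∃ u a b t, u.length = i ∧ l = u ++ a :: b :: t :=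
  ⟨l.take i, l[i], l[i + 1], l.drop (i + 2), by simp; omega, by
    rw [← List.drop_eq_getElem_cons, ← List.drop_eq_getElem_cons, List.take_append_drop]⟩

section

variable {n : ℕ} {w u v t : List Bool} {a b : Bool} {i j : ℕ}

lemma swapCorner_append_cons_cons : swapCorner (u ++ a :: b :: t) u.length = u ++ b :: a :: t := by
  simp [swapCorner]

lemma IsBadCorner.add_one_lt_length (h : IsBadCorner w i) : i + 1 < w.length := by
  rcases h with ⟨⟨-, h⟩, -⟩ | ⟨⟨-, h⟩, -⟩ <;> exact (List.getElem?_eq_some_iff.1 h).1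

lemma isBadCorner_append_of_add_two_le (h : j + 2 ≤ u.length) :
    IsBadCorner (u ++ v) j ↔ IsBadCorner u j := by
  simp [IsBadCorner, IsPeak, IsValley, ycoord, xcoord, List.getElem?_append_left,
    List.take_append_of_le_length, show j < u.length by omega, show j + 1 < u.length by omega,
    show j + 1 ≤ u.length by omega]

lemma isBadCorner_append_cons_cons :
    IsBadCorner (u ++ a :: b :: t) u.length ↔
      (a = true ∧ b = false ∧ Even (u.count true + 1)) ∨
        (a = false ∧ b = true ∧ Odd (u.count false + 1)) := by
  cases a <;> cases b <;>
    simp [IsBadCorner, IsPeak, IsValley, ycoord, xcoord, List.take_append, List.take_of_length_le]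

lemma noBadCorner_iff_forall_not_isBadCorner : NoBadCorner w ↔ ∀ i, ¬ IsBadCorner w i := by
  simp only [NoBadCorner, IsBadCorner, not_or, not_and, Nat.not_even_iff_odd,
    Nat.not_odd_iff_even, forall_and]

lemma IsDyckPath.count_le_of_append (hw : IsDyckPath n (u ++ v)) :
    u.count false ≤ u.count true := by
  simpa using hw.2.2 u.length

lemma IsDyckPath.head?_eq_some_true (hw : IsDyckPath n w) (hne : w ≠ []) :
    w.head? = some true := by
  obtain ⟨x, v, rfl⟩ := List.exists_cons_of_ne_nil hne
  have := IsDyckPath.count_le_of_append (u := [x]) (v := v) hw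
  cases x <;> simp_all

lemma IsDyckPath.swap (hw : IsDyckPath n (u ++ a :: b :: t))
    (hb : (u ++ [b]).count false ≤ (u ++ [b]).count true) : IsDyckPath n (u ++ b :: a :: t) := by
  obtain ⟨hlen, hcount, hprefix⟩ := hw
  refine ⟨by simpa using hlen, by simpa [List.count_cons, add_right_comm] using hcount, fun k => ?_⟩
  obtain hk | rfl | ⟨m, rfl⟩ :
      k ≤ u.length ∨ k = u.length + 1 ∨ ∃ m, k = u.length + (m + 2) := by
    rcases Nat.lt_or_ge k (u.length + 2) with h | h
    · omega
    · exact Or.inr (Or.inr ⟨k - (u.length + 2), by omega⟩)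
  · simpa [List.take_append_of_le_length hk] using hprefix k
  · simpa [List.take_append, List.take_of_length_le] using hb
  · have := hprefix (u.length + (m + 2))
    simp only [List.take_length_add_append, List.take_succ_cons, List.count_append,
      List.count_cons] at this ⊢
    omega

lemma count_parity_of_forall_not_isBadCorner {p s : List Bool} {c : Bool}
    (h0 : (p ++ c :: s).head? = some true)
    (hp : ∀ j < p.length, ¬ IsBadCorner (p ++ c :: s) j) :
    (c = true → Even (p.count false)) ∧ (c = false → Odd (p.count true)) := by
  induction p using List.reverseRecOn generalizing c s with
  | nil => cases c <;> simp_all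
  | append_singleton q d ih =>
    simp only [List.append_assoc, List.cons_append, List.nil_append] at h0 hp
    have hq := ih h0 fun j hj => hp j (by simp; omega)
    have hcorner := hp q.length (by simp)
    rw [isBadCorner_append_cons_cons] at hcorner
    cases d <;> cases c <;> simp_all [Nat.even_add_one]

lemma isDyckPath_and_isBadCorner_swap (hw : IsDyckPath n (u ++ a :: b :: t))
    (hbad : IsBadCorner (u ++ a :: b :: t) u.length)
    (hfirst : ∀ j < u.length, ¬ IsBadCorner (u ++ a :: b :: t) j) :
    IsDyckPath n (u ++ b :: a :: t) ∧ IsBadCorner (u ++ b :: a :: t) u.length := by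
  have hpar := count_parity_of_forall_not_isBadCorner (hw.head?_eq_some_true (by simp)) hfirst
  rw [isBadCorner_append_cons_cons] at hbad ⊢
  rcases hbad with ⟨rfl, rfl, hy⟩ | ⟨rfl, rfl, hx⟩
  · have hx := hpar.1 rfl
    have hle := IsDyckPath.count_le_of_append (u := u ++ [true, false]) (v := t) (by simpa using hw)
    rw [Nat.even_iff] at hx hy
    refine ⟨hw.swap ?_, Or.inr ⟨rfl, rfl, ?_⟩⟩
    · simp at hle ⊢; omega
    · rw [Nat.odd_iff]; omega
  · have hy := hpar.2 rfl
    rw [Nat.odd_iff] at hx hy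
    refine ⟨hw.swap ?_, Or.inl ⟨rfl, rfl, ?_⟩⟩
    · simpa using hw.count_le_of_append.trans (Nat.le_succ _)
    · rw [Nat.even_iff]; omega

lemma not_isBadCorner_swap_of_isBadCorner {c : Bool}
    (h : IsBadCorner (u ++ c :: a :: b :: t) (u.length + 1)) :
    ¬ IsBadCorner (u ++ c :: b :: a :: t) u.length := by
  rw [show u ++ c :: a :: b :: t = (u ++ [c]) ++ a :: b :: t by simp,
    show u.length + 1 = (u ++ [c]).length by simp, isBadCorner_append_cons_cons] at h
  rw [isBadCorner_append_cons_cons]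
  cases c <;> rcases h with ⟨rfl, rfl, h⟩ | ⟨rfl, rfl, h⟩ <;>
    simp_all [Nat.even_add_one, ← Nat.not_even_iff_odd]

lemma forall_not_isBadCorner_swap (hbad : IsBadCorner (u ++ a :: b :: t) u.length)
    (hfirst : ∀ j < u.length, ¬ IsBadCorner (u ++ a :: b :: t) j) :
    ∀ j < u.length, ¬ IsBadCorner (u ++ b :: a :: t) j := by
  intro j hj
  rcases Nat.lt_or_ge (j + 1) u.length with h | h
  · rw [isBadCorner_append_of_add_two_le h]
    exact (isBadCorner_append_of_add_two_le h).not.1 (hfirst j hj)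
  · have hne : u ≠ [] := List.ne_nil_of_length_pos (by omega)
    obtain ⟨v, c, rfl⟩ : ∃ v c, u = v ++ [c] :=
      ⟨u.dropLast, u.getLast hne, (List.dropLast_append_getLast hne).symm⟩
    obtain rfl : j = v.length := by simp at hj h; omega
    simp only [List.append_assoc, List.cons_append, List.nil_append, List.length_append,
      List.length_singleton] at hbad ⊢
    exact not_isBadCorner_swap_of_isBadCorner hbad

lemma phiMap_of_noBadCorner (h : NoBadCorner w) : phiMap w = w := by
  rw [noBadCorner_iff_forall_not_isBadCorner] at h
  simp [phiMap, h]

lemma phiMap_eq_swapCorner (h : IsBadCorner w i) (hfirst : ∀ j < i, ¬ IsBadCorner w j) :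
    phiMap w = swapCorner w i := by
  classical
  rw [phiMap, dif_pos ⟨i, h⟩, (Nat.find_eq_iff _).2 ⟨h, hfirst⟩]

end

/-- `φ` (swapping the first bad corner, if any) is an involution on Dyck paths of size `n`
whose fixed points are exactly the Dyck paths with no bad corner. -/
theorem phiMap_involution (n : ℕ) (w : List Bool) (hw : IsDyckPath n w) :
    IsDyckPath n (phiMap w) ∧ phiMap (phiMap w) = w ∧ (phiMap w = w ↔ NoBadCorner w) := by
  by_cases h : NoBadCorner w
  · simp [phiMap_of_noBadCorner h, hw, h]
  classical
  obtain ⟨i, hbad, hfirst⟩ : ∃ i, IsBadCorner w i ∧ ∀ j < i, ¬ IsBadCorner w j := by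
    rw [noBadCorner_iff_forall_not_isBadCorner, not_forall_not] at h
    exact ⟨Nat.find h, Nat.find_spec h, fun j => Nat.find_min h⟩
  obtain ⟨u, a, b, t, rfl, rfl⟩ := List.exists_eq_append_cons_cons hbad.add_one_lt_length
  obtain ⟨hw', hbad'⟩ := isDyckPath_and_isBadCorner_swap hw hbad hfirst
  have hphi : phiMap (u ++ a :: b :: t) = u ++ b :: a :: t := by
    rw [phiMap_eq_swapCorner hbad hfirst, swapCorner_append_cons_cons]
  have hphi' : phiMap (u ++ b :: a :: t) = u ++ a :: b :: t := by
    rw [phiMap_eq_swapCorner hbad' (forall_not_isBadCorner_swap hbad hfirst),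
      swapCorner_append_cons_cons]
  have hab : a ≠ b := by
    rcases isBadCorner_append_cons_cons.1 hbad with ⟨rfl, rfl, -⟩ | ⟨rfl, rfl, -⟩ <;> decide
  refine ⟨hphi ▸ hw', by rw [hphi, hphi'], iff_of_false ?_ h⟩
  simp [hphi, hab.symm]
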